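/- For every vector x ≥ 0 satisfying the state-action frequency constraints (initial condition, flow conservation, and terminal condition), there exists a unique regular policy π^x such that x = x_{π^x}. Hence π ↦ x_π is a bijection from regular policies onto the polytope P of state-action frequency vectors. -/

import Mathlib

open Finset

/-- A finite-horizon MDP with `N` states, horizon `T` (epochs `0,…,T-1`, so `T ≥ 2` has at
least one decision epoch), action sets `Fin (k s)` for each state `s`, and transition
probabilities `p t s a j = p_t(j | s, a)` governing the move from epoch `t` to `t+1`,
together with a strictly positive initial distribution `α`. -/
structure MDP (N T : ℕ) (k : Fin N → ℕ) : Type where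
  p : ℕ → (s : Fin N) → Fin (k s) → Fin N → ℝ
  α : Fin N → ℝ
  p_nonneg : ∀ t s a j, 0 ≤ p t s a j
  p_sum : ∀ t s a, ∑ j, p t s a j = 1
  α_pos : ∀ s, 0 < α s
  α_sum : ∑ s, α s = 1

/-- A (randomized, Markov, non-stationary) policy: `q t s a` is the probability that
action `a` is chosen in state `s` at decision epoch `t`. -/
structure Policy (N : ℕ) (k : Fin N → ℕ) : Type where
  q : ℕ → (s : Fin N) → Fin (k s) → ℝ
  q_nonneg : ∀ t s a, 0 ≤ q t s a
  q_sum : ∀ t s, ∑ a, q t s a = 1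

variable {N T : ℕ} {k : Fin N → ℕ}

/-- `condProb M π j t s` is `P^π(S_t = s | S_0 = j)` (epochs indexed from 0). -/
def condProb (M : MDP N T k) (π : Policy N k) (j : Fin N) : ℕ → Fin N → ℝ
  | 0, s => if s = j then 1 else 0
  | t+1, s => ∑ s', ∑ a, condProb M π j t s' * π.q t s' a * M.p t s' a s

/-- The state-action frequency `x_{π,t}(s,a) = ∑_j α(j) P^π(S_t = s, A_t = a | S_0 = j)`
(epochs indexed from 0, so the decision epochs are `0,…,T-2`). -/
def xsa (M : MDP N T k) (π : Policy N k) (t : ℕ) (s : Fin N) (a : Fin (k s)) : ℝ :=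
  ∑ j, M.α j * condProb M π j t s * π.q t s a

/-- The terminal state frequency `x_{π,T}(s)` (terminal epoch is `T-1` in 0-based indexing). -/
def xT (M : MDP N T k) (π : Policy N k) (s : Fin N) : ℝ :=
  ∑ j, M.α j * condProb M π j (T-1) s

/-- A policy is regular if at every decision epoch `t ≤ T-2` and at every state `s`
unreachable at `t`, it puts full mass on the first action. -/
def RegularPol (M : MDP N T k) (hk : ∀ s, 1 ≤ k s) (π : Policy N k) : Prop :=
  ∀ t s, t + 2 ≤ T → (∀ j, condProb M π j t s = 0) → π.q t s ⟨0, hk s⟩ = 1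

/-!
Write `w_t(s) = ∑_j α(j) P^π(S_t = s | S_1 = j)` for the state marginal of a policy `π`, so that
`x_{π,t}(s,a) = w_t(s) q_t(s,a)` and `w` obeys the flow equation `w_{t+1}(j) = ∑ p_t(j|s,a) x_{π,t}(s,a)`.
Given a feasible `y`, let `π^y` choose `a` in `s` at `t` with probability `y_t(s,a) / ∑_b y_t(s,b)`,
and action `1` where this sum vanishes. Constraints (a) and (b) show by induction on `t` that
`w_t(s) = ∑_b y_t(s,b)`, whence `x_{π^y} = y`; (c) is then the flow equation at the last step,
and `π^y` is regular because `α > 0` makes `w_t(s) = 0` exactly at unreachable states.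
Conversely, any `π` with `x_π = y` has `w_t(s) = ∑_a x_{π,t}(s,a) = ∑_b y_t(s,b)`, which fixes
`q_t(s,·)` wherever it is nonzero, and regularity fixes it where it vanishes.
-/

section StateFrequency

variable (M : MDP N T k) (π : Policy N k)

def stateFreq (t : ℕ) (s : Fin N) : ℝ :=
  ∑ j, M.α j * condProb M π j t s

lemma condProb_nonneg (j : Fin N) (t : ℕ) (s : Fin N) : 0 ≤ condProb M π j t s := by
  induction t generalizing s with
  | zero => unfold condProb; split_ifs <;> norm_num
  | succ t ih =>
    exact sum_nonneg fun s' _ => sum_nonneg fun a _ =>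
      mul_nonneg (mul_nonneg (ih s') (π.q_nonneg t s' a)) (M.p_nonneg t s' a s)

lemma stateFreq_zero (s : Fin N) : stateFreq M π 0 s = M.α s := by
  simp [stateFreq, condProb, mul_ite]

lemma xsa_eq_stateFreq_mul (t : ℕ) (s : Fin N) (a : Fin (k s)) :
    xsa M π t s a = stateFreq M π t s * π.q t s a := by
  simp only [xsa, stateFreq, sum_mul]

lemma sum_xsa (t : ℕ) (s : Fin N) : ∑ a, xsa M π t s a = stateFreq M π t s := by
  simp only [xsa_eq_stateFreq_mul, ← mul_sum, π.q_sum, mul_one]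

lemma stateFreq_succ (t : ℕ) (s : Fin N) :
    stateFreq M π (t + 1) s = ∑ s', ∑ a, M.p t s' a s * xsa M π t s' a := by
  simp only [stateFreq, condProb, xsa, mul_sum]
  rw [sum_comm]
  refine sum_congr rfl fun s' _ => ?_
  rw [sum_comm]
  exact sum_congr rfl fun a _ => sum_congr rfl fun j _ => by ring

lemma xT_eq_stateFreq (s : Fin N) : xT M π s = stateFreq M π (T - 1) s := rfl

lemma condProb_eq_zero_of_stateFreq_eq_zero {t : ℕ} {s : Fin N}
    (h : stateFreq M π t s = 0) (j : Fin N) : condProb M π j t s = 0 := by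
  have hterm := (sum_eq_zero_iff_of_nonneg fun j _ =>
    mul_nonneg (M.α_pos j).le (condProb_nonneg M π j t s)).mp h j (mem_univ j)
  exact (mul_eq_zero.mp hterm).resolve_left (M.α_pos j).ne'

end StateFrequency

lemma Policy.q_eq_ite_of_q_eq_one (π : Policy N k) {t : ℕ} {s : Fin N} {b : Fin (k s)}
    (hb : π.q t s b = 1) (a : Fin (k s)) : π.q t s a = if a = b then 1 else 0 := by
  split_ifs with hab
  · rw [hab, hb]
  have hrest : ∑ c ∈ univ.erase b, π.q t s c = 0 := by
    have := π.q_sum t s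
    rw [← add_sum_erase _ _ (mem_univ b), hb] at this
    linarith
  exact (sum_eq_zero_iff_of_nonneg fun c _ => π.q_nonneg t s c).mp hrest a
    (mem_erase.mpr ⟨hab, mem_univ a⟩)

section OfFreq

variable (hk : ∀ s, 1 ≤ k s) (y : ℕ → (s : Fin N) → Fin (k s) → ℝ)
  (hy : ∀ t s a, t + 2 ≤ T → 0 ≤ y t s a)

/-- The policy `π^y`; outside the decision epochs `y` carries no information and the policy
is set to action `1` there. -/
noncomputable def Policy.ofFreq : Policy N k where
  q t s a := if t + 2 ≤ T ∧ 0 < ∑ b, y t s b then y t s a / ∑ b, y t s b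
    else if a = ⟨0, hk s⟩ then 1 else 0
  q_nonneg t s a := by
    split_ifs with h
    exacts [div_nonneg (hy t s a h.1) h.2.le, zero_le_one, le_rfl]
  q_sum t s := by
    split_ifs with h
    · rw [← sum_div, div_self h.2.ne']
    · simp

lemma Policy.ofFreq_q_of_sum_eq_zero {t : ℕ} {s : Fin N} (h : ∑ b, y t s b = 0)
    (a : Fin (k s)) : (Policy.ofFreq hk y hy).q t s a = if a = ⟨0, hk s⟩ then 1 else 0 := by
  simp [Policy.ofFreq, h]

lemma Policy.ofFreq_q_of_sum_pos {t : ℕ} (ht : t + 2 ≤ T) {s : Fin N}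
    (h : 0 < ∑ b, y t s b) (a : Fin (k s)) :
    (Policy.ofFreq hk y hy).q t s a = y t s a / ∑ b, y t s b := by
  simp [Policy.ofFreq, ht, h]

lemma Policy.sum_mul_ofFreq_q {t : ℕ} (ht : t + 2 ≤ T) (s : Fin N) (a : Fin (k s)) :
    (∑ b, y t s b) * (Policy.ofFreq hk y hy).q t s a = y t s a := by
  rcases (sum_nonneg fun b _ => hy t s b ht).eq_or_lt with hzero | hpos
  · rw [← hzero, zero_mul]
    exact ((sum_eq_zero_iff_of_nonneg fun b _ => hy t s b ht).mp hzero.symm a (mem_univ a)).symm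
  · rw [Policy.ofFreq_q_of_sum_pos hk y hy ht hpos, mul_div_cancel₀ _ hpos.ne']

lemma stateFreq_ofFreq (M : MDP N T k) (ha : ∀ j, ∑ a, y 0 j a = M.α j)
    (hb : ∀ t j, t + 3 ≤ T → ∑ a, y (t+1) j a = ∑ s, ∑ a, M.p t s a j * y t s a)
    {t : ℕ} (ht : t + 2 ≤ T) (s : Fin N) :
    stateFreq M (Policy.ofFreq hk y hy) t s = ∑ b, y t s b := by
  induction t generalizing s with
  | zero => rw [stateFreq_zero, ha]
  | succ t ih =>
    rw [stateFreq_succ, hb t s (by omega)]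
    refine sum_congr rfl fun s' _ => sum_congr rfl fun a _ => ?_
    rw [xsa_eq_stateFreq_mul, ih (by omega), Policy.sum_mul_ofFreq_q hk y hy (by omega)]

lemma RegularPol.q_eq_ofFreq_q {M : MDP N T k} {π : Policy N k} (hreg : RegularPol M hk π)
    (hx : ∀ t s a, t + 2 ≤ T → xsa M π t s a = y t s a)
    {t : ℕ} (ht : t + 2 ≤ T) (s : Fin N) (a : Fin (k s)) :
    π.q t s a = (Policy.ofFreq hk y hy).q t s a := by
  have hw : stateFreq M π t s = ∑ b, y t s b := by
    rw [← sum_xsa]; exact sum_congr rfl fun b _ => hx t s b ht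
  rcases (sum_nonneg fun b _ => hy t s b ht).eq_or_lt with hzero | hpos
  · have hfirst := hreg t s ht
      (condProb_eq_zero_of_stateFreq_eq_zero M π (hw.trans hzero.symm))
    rw [π.q_eq_ite_of_q_eq_one hfirst, Policy.ofFreq_q_of_sum_eq_zero hk y hy hzero.symm]
  · rw [Policy.ofFreq_q_of_sum_pos hk y hy ht hpos, eq_div_iff hpos.ne', ← hw, mul_comm,
      ← xsa_eq_stateFreq_mul, hx t s a ht]

end OfFreq

theorem frequency_polytope_realized_by_unique_regular_policy_general
    (N T : ℕ) (k : Fin N → ℕ) (hk : ∀ s, 1 ≤ k s) (hT : 2 ≤ T) (M : MDP N T k)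
    (y : ℕ → (s : Fin N) → Fin (k s) → ℝ) (yT : Fin N → ℝ)
    (hy_nonneg : ∀ t s a, t + 2 ≤ T → 0 ≤ y t s a)
    (ha : ∀ j, ∑ a, y 0 j a = M.α j)
    (hb : ∀ t j, t + 3 ≤ T → ∑ a, y (t+1) j a = ∑ s, ∑ a, M.p t s a j * y t s a)
    (hc : ∀ j, yT j = ∑ s, ∑ a, M.p (T-2) s a j * y (T-2) s a) :
    (∃ π : Policy N k, RegularPol M hk π ∧
        (∀ t s a, t + 2 ≤ T → xsa M π t s a = y t s a) ∧ (∀ s, xT M π s = yT s)) ∧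
      (∀ π π' : Policy N k, RegularPol M hk π → RegularPol M hk π' →
        (∀ t s a, t + 2 ≤ T → xsa M π t s a = y t s a) →
        (∀ t s a, t + 2 ≤ T → xsa M π' t s a = y t s a) →
        ∀ t s a, t + 2 ≤ T → π.q t s a = π'.q t s a) := by
  set π := Policy.ofFreq hk y hy_nonneg
  have hw : ∀ t, t + 2 ≤ T → ∀ s, stateFreq M π t s = ∑ b, y t s b :=
    fun t ht => stateFreq_ofFreq hk y hy_nonneg M ha hb ht
  have hx : ∀ t s a, t + 2 ≤ T → xsa M π t s a = y t s a := fun t s a ht => by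
    rw [xsa_eq_stateFreq_mul, hw t ht, Policy.sum_mul_ofFreq_q hk y hy_nonneg ht]
  refine ⟨⟨π, fun t s ht hunreachable => ?_, hx, fun s => ?_⟩, ?_⟩
  · have hw0 : stateFreq M π t s = 0 := by simp [stateFreq, hunreachable]
    rw [Policy.ofFreq_q_of_sum_eq_zero hk y hy_nonneg ((hw t ht s).symm.trans hw0), if_pos rfl]
  · rw [xT_eq_stateFreq, show T - 1 = T - 2 + 1 by omega, stateFreq_succ, hc]
    exact sum_congr rfl fun s' _ => sum_congr rfl fun a _ => by rw [hx _ _ _ (by omega)]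
  · intro ρ ρ' hreg hreg' hxρ hxρ' t s a ht
    rw [hreg.q_eq_ofFreq_q hk y hy_nonneg hxρ ht, hreg'.q_eq_ofFreq_q hk y hy_nonneg hxρ' ht]

/-- every nonnegative solution `(y, yT)` of the state-action frequency
constraints (a)-(c) is realized by a regular policy `π` (i.e. `y = x_π`, `yT = x_{π,T}`),
and this regular policy is unique (its decision rules at all decision epochs are
uniquely determined).  Hence `π ↦ x_π` is a bijection from regular policies onto the
polytope of state-action frequency vectors. -/
theorem frequency_polytope_realized_by_unique_regular_policy
    (N T : ℕ) (k : Fin N → ℕ) (hk : ∀ s, 1 ≤ k s) (hT : 2 ≤ T) (M : MDP N T k)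
    (y : ℕ → (s : Fin N) → Fin (k s) → ℝ) (yT : Fin N → ℝ)
    (hy_nonneg : ∀ t s a, t + 2 ≤ T → 0 ≤ y t s a) (hyT_nonneg : ∀ s, 0 ≤ yT s)
    (ha : ∀ j, ∑ a, y 0 j a = M.α j)
    (hb : ∀ t j, t + 3 ≤ T → ∑ a, y (t+1) j a = ∑ s, ∑ a, M.p t s a j * y t s a)
    (hc : ∀ j, yT j = ∑ s, ∑ a, M.p (T-2) s a j * y (T-2) s a) :
    (∃ π : Policy N k, RegularPol M hk π ∧
        (∀ t s a, t + 2 ≤ T → xsa M π t s a = y t s a) ∧ (∀ s, xT M π s = yT s)) ∧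
      (∀ π π' : Policy N k, RegularPol M hk π → RegularPol M hk π' →
        (∀ t s a, t + 2 ≤ T → xsa M π t s a = y t s a) →
        (∀ t s a, t + 2 ≤ T → xsa M π' t s a = y t s a) →
        ∀ t s a, t + 2 ≤ T → π.q t s a = π'.q t s a) :=
  frequency_polytope_realized_by_unique_regular_policy_general N T k hk hT M y yT hy_nonneg ha hb hc
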